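/- arXiv:1101.3014 — 2 statements merged into one kernel-verified Lean document; each statement's English description precedes it below -/
import Mathlib

section
/- Let (M,ρ) be a finite pseudometric space and G = (V,E) a finite connected graph joining M that has an interior vertex of degree 1 (a vertex of degree 1 not belonging to M). Then the weights of generalized fillings of (M,ρ) of type G are unbounded below: for every c ∈ ℝ there exists a weight function w : E → ℝ such that (G,w) is a generalized filling of (M,ρ) and w(G) < c. In other words, mpf₋(M,G) = −∞. -/
/-! An interior leaf lies on no path between two boundary points, since such a path would have
to enter and leave it through two different edges. So the weight of the leaf edge does not enter
the filling condition, and lowering it in any filling (e.g. a large constant weight) makes the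
total weight arbitrarily negative. -/

open scoped BigOperators

namespace MinFill

variable {V : Type*}

/-- The total weight of a (generalized) weighted graph: the sum of the weights
of its edges. -/
noncomputable def graphWeight (G : SimpleGraph V) (w : Sym2 V → ℝ) : ℝ :=
  ∑ᶠ e ∈ G.edgeSet, w e

/-- The weight of a walk: the sum of the weights of its edges. -/
def walkWeight {G : SimpleGraph V} (w : Sym2 V → ℝ) {u v : V} (p : G.Walk u v) : ℝ :=
  (p.edges.map w).sum

/-- `dw G w u v` is the minimum over simple paths in `G` from `u` to `v` of the
sum of the weights of their edges. -/
noncomputable def dw (G : SimpleGraph V) (w : Sym2 V → ℝ) (u v : V) : ℝ :=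
  sInf {r : ℝ | ∃ p : G.Walk u v, p.IsPath ∧ walkWeight w p = r}

/-- The degree of a vertex: the number of edges incident to it. -/
noncomputable def deg (G : SimpleGraph V) (v : V) : ℕ :=
  (G.neighborSet v).ncard

/-- `ρ` is a pseudometric on the subset `M`: symmetric, nonnegative, vanishing
on the diagonal and satisfying the triangle inequality. -/
def IsPseudometricOn (M : Set V) (ρ : V → V → ℝ) : Prop :=
  (∀ p ∈ M, ∀ q ∈ M, ρ p q = ρ q p) ∧
  (∀ p ∈ M, ∀ q ∈ M, 0 ≤ ρ p q) ∧
  (∀ p ∈ M, ρ p p = 0) ∧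
  (∀ p ∈ M, ∀ q ∈ M, ∀ r ∈ M, ρ p r ≤ ρ p q + ρ q r)

/-- `(G, w)` is a generalized filling of `(M, ρ)` (with `M ⊆ V`): `G` is
connected (and joins `M`), and for all boundary points `p, q ∈ M` every simple
path in `G` from `p` to `q` has weight at least `ρ p q` (equivalently
`ρ p q ≤ d_w(p, q)`). -/
def IsGenFilling (G : SimpleGraph V) (w : Sym2 V → ℝ) (M : Set V) (ρ : V → V → ℝ) : Prop :=
  G.Connected ∧ ∀ p ∈ M, ∀ q ∈ M, ∀ γ : G.Walk p q, γ.IsPath → ρ p q ≤ walkWeight w γ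

open SimpleGraph

variable {G : SimpleGraph V} {M : Set V} {ρ : V → V → ℝ}

lemma walkWeight_const (K : ℝ) {u v : V} (γ : G.Walk u v) :
    walkWeight (fun _ => K) γ = γ.length * K := by
  simp [walkWeight, List.map_const', List.sum_replicate]

lemma walkWeight_update_of_notMem_edges [DecidableEq V] (w : Sym2 V → ℝ) {e : Sym2 V} (t : ℝ)
    {u v : V} {γ : G.Walk u v} (he : e ∉ γ.edges) :
    walkWeight (Function.update w e t) γ = walkWeight w γ := by
  refine congrArg List.sum (List.map_congr_left fun e' he' => ?_)
  exact Function.update_of_ne (ne_of_mem_of_not_mem he' he) t w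

lemma isGenFilling_const (hdiag : ∀ p ∈ M, ρ p p = 0) (hconn : G.Connected) {K : ℝ}
    (hK₀ : 0 ≤ K) (hK : ∀ p ∈ M, ∀ q ∈ M, ρ p q ≤ K) :
    IsGenFilling G (fun _ => K) M ρ := by
  refine ⟨hconn, fun p hp q hq γ hγ => ?_⟩
  rw [walkWeight_const]
  by_cases hpq : p = q
  · subst hpq
    simp [(Walk.isPath_iff_nil.mp hγ).length_eq_zero, hdiag p hp]
  · have hlen : (1 : ℝ) ≤ γ.length := by
      exact_mod_cast Nat.one_le_iff_ne_zero.mpr fun h => hpq (Walk.eq_of_length_eq_zero h)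
    nlinarith [hK p hp q hq]

lemma exists_isGenFilling [Finite V] (hdiag : ∀ p ∈ M, ρ p p = 0) (hconn : G.Connected) :
    ∃ w, IsGenFilling G w M ρ := by
  obtain ⟨K, hK⟩ := (Set.finite_range (Function.uncurry ρ)).bddAbove
  exact ⟨_, isGenFilling_const hdiag hconn (le_max_left 0 K)
    fun p _ q _ => (hK ⟨(p, q), rfl⟩).trans (le_max_right 0 K)⟩

lemma IsGenFilling.update_leaf_edge [DecidableEq V] {w : Sym2 V → ℝ}
    (hw : IsGenFilling G w M ρ) {x : V} (hx : (G.neighborSet x).Subsingleton) (hxM : x ∉ M)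
    (y : V) (t : ℝ) :
    IsGenFilling G (Function.update w s(x, y) t) M ρ := by
  refine ⟨hw.1, fun p hp q hq γ hγ => ?_⟩
  have hxγ : x ∉ γ.support := hγ.isTrail.not_mem_support_of_subsingleton_neighborSet
    (ne_of_mem_of_not_mem hp hxM).symm (ne_of_mem_of_not_mem hq hxM).symm hx
  rw [walkWeight_update_of_notMem_edges w t fun he => hxγ (γ.fst_mem_support_of_mem_edges he)]
  exact hw.2 p hp q hq γ hγ

lemma graphWeight_update [DecidableEq V] (hfin : G.edgeSet.Finite) (w : Sym2 V → ℝ)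
    {e : Sym2 V} (he : e ∈ G.edgeSet) (t : ℝ) :
    graphWeight G (Function.update w e t) = graphWeight G w - w e + t := by
  have he' : e ∈ hfin.toFinset := hfin.mem_toFinset.mpr he
  simp only [graphWeight, finsum_mem_eq_finite_toFinset_sum _ hfin,
    Finset.sum_update_of_mem he', Finset.sum_eq_add_sum_sdiff_singleton_of_mem he' w]
  ring

/-- If a connected graph `G` joining `M` has an interior
vertex of degree 1, then the weights of generalized fillings of type `G` are
unbounded below: `mpf₋(M, G) = -∞`. -/
theorem interior_leaf_unbounded_below {V : Type*} [Fintype V] (G : SimpleGraph V)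
    (M : Set V) (ρ : V → V → ℝ) (hρ : IsPseudometricOn M ρ) (hconn : G.Connected)
    (x : V) (hx : deg G x = 1) (hxM : x ∉ M) :
    ∀ c : ℝ, ∃ w : Sym2 V → ℝ, IsGenFilling G w M ρ ∧ graphWeight G w < c := by
  classical
  intro c
  obtain ⟨y, hy⟩ := Set.ncard_eq_one.mp hx
  have hxy : G.Adj x y := hy.symm.subset rfl
  obtain ⟨w, hw⟩ := exists_isGenFilling hρ.2.2.1 hconn
  refine ⟨Function.update w s(x, y) (c - 1 - graphWeight G w + w s(x, y)),
    hw.update_leaf_edge (hy ▸ Set.subsingleton_singleton) hxM y _, ?_⟩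
  rw [graphWeight_update (Set.toFinite _) w hxy]
  linarith

end MinFill
end

section
/- Let M = {a,b,c,d} with the pseudometric ρ(a,b) = ρ(c,d) = 4 and ρ(b,c) = ρ(a,d) = ρ(a,c) = ρ(b,d) = 3, and let G be the tree with vertex set {a,b,c,d,u,v} and edge set {au, bu, uv, cv, dv}. Then mpf(M,G) = 8 while mpf₋(M,G) = 7; in particular the generalized parametric minimal filling weight of type G is strictly smaller than the parametric minimal filling weight of type G. -/
open scoped BigOperators

namespace MinFill

variable {V : Type*}

/-- The tree of Example 2: vertices `a = 0, b = 1, c = 2, d = 3, u = 4, v = 5`,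
edges `au, bu, uv, cv, dv`. -/
def exampleTree : SimpleGraph (Fin 6) :=
  SimpleGraph.fromEdgeSet {s(0, 4), s(1, 4), s(4, 5), s(2, 5), s(3, 5)}

/-- The boundary of Example 2: `{a, b, c, d}`. -/
def exampleBoundary : Set (Fin 6) := {0, 1, 2, 3}

/-- The pseudometric of Example 2: `ρ(a,b) = ρ(c,d) = 4`, all the remaining
distances between distinct boundary points equal `3`. -/
noncomputable def exampleDist : Fin 6 → Fin 6 → ℝ := fun x y =>
  if x = y then 0
  else if (x = 0 ∧ y = 1) ∨ (x = 1 ∧ y = 0) ∨ (x = 2 ∧ y = 3) ∨ (x = 3 ∧ y = 2) then 4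
  else 3

/-!
Paths in a tree are unique, so a weighting of the example tree is a generalized filling exactly
when the six leaf-to-leaf paths are long enough. The paths `a–b` and `c–d` avoid the edge `uv`
and share no edge, so a nonnegative filling weighs at least `4 + 4 + w(uv) ≥ 8`. Without the
sign condition, the paths `a–b`, `c–d`, `a–c`, `b–d` together use every edge exactly twice, so
twice the weight is at least `4 + 4 + 3 + 3`. Weight `2` on the pendant edges and `0`, resp.
`-1`, on `uv` attains both bounds.
-/

open SimpleGraph

instance : DecidableRel exampleTree.Adj := fun x y =>
  decidable_of_iff ((s(x, y) = s(0, 4) ∨ s(x, y) = s(1, 4) ∨ s(x, y) = s(4, 5) ∨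
    s(x, y) = s(2, 5) ∨ s(x, y) = s(3, 5)) ∧ x ≠ y) Iff.rfl

section walkWeight

variable {G : SimpleGraph V} (w : Sym2 V → ℝ)

@[simp]
theorem walkWeight_nil {u : V} : walkWeight w (Walk.nil : G.Walk u u) = 0 := rfl

@[simp]
theorem walkWeight_cons {u v x : V} (h : G.Adj u v) (p : G.Walk v x) :
    walkWeight w (Walk.cons h p) = w s(u, v) + walkWeight w p := rfl

@[simp]
theorem walkWeight_reverse {u v : V} (p : G.Walk u v) :
    walkWeight w p.reverse = walkWeight w p := by
  simp [walkWeight, Walk.edges_reverse, List.sum_reverse]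

end walkWeight

theorem isGenFilling_of_isTree [LinearOrder V] {G : SimpleGraph V} {w : Sym2 V → ℝ} {M : Set V}
    {ρ : V → V → ℝ} (hG : G.IsTree) (hsymm : ∀ p ∈ M, ∀ q ∈ M, ρ p q = ρ q p)
    (hdiag : ∀ p ∈ M, ρ p p ≤ 0)
    (h : ∀ p ∈ M, ∀ q ∈ M, p < q → ∃ γ : G.Walk p q, γ.IsPath ∧ ρ p q ≤ walkWeight w γ) :
    IsGenFilling G w M ρ := by
  refine ⟨hG.connected, fun p hp q hq γ hγ => ?_⟩
  have unique {u v : V} {γ₁ γ₂ : G.Walk u v} (h₁ : γ₁.IsPath) (h₂ : γ₂.IsPath) : γ₁ = γ₂ :=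
    (hG.existsUnique_path u v).unique h₁ h₂
  rcases lt_trichotomy p q with hpq | rfl | hqp
  · obtain ⟨γ', hγ', hle⟩ := h p hp q hq hpq
    rwa [unique hγ hγ']
  · rw [(Walk.isPath_iff_nil.mp hγ).eq_nil, walkWeight_nil]
    exact hdiag p hp
  · obtain ⟨γ', hγ', hle⟩ := h q hq p hp hqp
    rwa [unique hγ hγ'.reverse, walkWeight_reverse, hsymm p hp q hq]

theorem exampleTree_isTree : exampleTree.IsTree := by
  rw [isTree_iff_connected_and_card, Nat.card_eq_fintype_card, ← edgeFinset_card,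
    Nat.card_eq_fintype_card, Fintype.card_fin]
  exact ⟨(connected_iff _).mpr ⟨by decide, inferInstance⟩, by decide⟩

theorem graphWeight_exampleTree (w : Sym2 (Fin 6) → ℝ) :
    graphWeight exampleTree w = w s(0, 4) + w s(1, 4) + w s(4, 5) + w s(2, 5) + w s(3, 5) := by
  have edges : exampleTree.edgeFinset = {s(0, 4), s(1, 4), s(4, 5), s(2, 5), s(3, 5)} := by
    decide
  rw [graphWeight, ← coe_edgeFinset, finsum_mem_coe_finset, edges]
  simp [Finset.sum_insert, add_assoc]

theorem exampleDist_comm (x y : Fin 6) : exampleDist x y = exampleDist y x := by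
  simp only [exampleDist, eq_comm (a := x)]
  congr 2
  apply propext
  tauto

theorem exampleTree_adj_au : exampleTree.Adj 0 4 := by decide
theorem exampleTree_adj_bu : exampleTree.Adj 1 4 := by decide
theorem exampleTree_adj_uv : exampleTree.Adj 4 5 := by decide
theorem exampleTree_adj_cv : exampleTree.Adj 2 5 := by decide
theorem exampleTree_adj_dv : exampleTree.Adj 3 5 := by decide

def examplePathAB : exampleTree.Walk 0 1 :=
  .cons exampleTree_adj_au (.cons exampleTree_adj_bu.symm .nil)
def examplePathCD : exampleTree.Walk 2 3 :=
  .cons exampleTree_adj_cv (.cons exampleTree_adj_dv.symm .nil)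
def examplePathAC : exampleTree.Walk 0 2 :=
  .cons exampleTree_adj_au (.cons exampleTree_adj_uv (.cons exampleTree_adj_cv.symm .nil))
def examplePathAD : exampleTree.Walk 0 3 :=
  .cons exampleTree_adj_au (.cons exampleTree_adj_uv (.cons exampleTree_adj_dv.symm .nil))
def examplePathBC : exampleTree.Walk 1 2 :=
  .cons exampleTree_adj_bu (.cons exampleTree_adj_uv (.cons exampleTree_adj_cv.symm .nil))
def examplePathBD : exampleTree.Walk 1 3 :=
  .cons exampleTree_adj_bu (.cons exampleTree_adj_uv (.cons exampleTree_adj_dv.symm .nil))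

section examplePaths

variable (w : Sym2 (Fin 6) → ℝ)

@[simp]
theorem walkWeight_examplePathAB : walkWeight w examplePathAB = w s(0, 4) + w s(1, 4) := by
  simp [examplePathAB, Sym2.eq_swap]

@[simp]
theorem walkWeight_examplePathCD : walkWeight w examplePathCD = w s(2, 5) + w s(3, 5) := by
  simp [examplePathCD, Sym2.eq_swap]

@[simp]
theorem walkWeight_examplePathAC :
    walkWeight w examplePathAC = w s(0, 4) + w s(4, 5) + w s(2, 5) := by
  simp [examplePathAC, Sym2.eq_swap, add_assoc]

@[simp]
theorem walkWeight_examplePathAD :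
    walkWeight w examplePathAD = w s(0, 4) + w s(4, 5) + w s(3, 5) := by
  simp [examplePathAD, Sym2.eq_swap, add_assoc]

@[simp]
theorem walkWeight_examplePathBC :
    walkWeight w examplePathBC = w s(1, 4) + w s(4, 5) + w s(2, 5) := by
  simp [examplePathBC, Sym2.eq_swap, add_assoc]

@[simp]
theorem walkWeight_examplePathBD :
    walkWeight w examplePathBD = w s(1, 4) + w s(4, 5) + w s(3, 5) := by
  simp [examplePathBD, Sym2.eq_swap, add_assoc]

end examplePaths

theorem isGenFilling_exampleTree_iff (w : Sym2 (Fin 6) → ℝ) :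
    IsGenFilling exampleTree w exampleBoundary exampleDist ↔
      4 ≤ w s(0, 4) + w s(1, 4) ∧ 4 ≤ w s(2, 5) + w s(3, 5) ∧
      3 ≤ w s(0, 4) + w s(4, 5) + w s(2, 5) ∧ 3 ≤ w s(0, 4) + w s(4, 5) + w s(3, 5) ∧
      3 ≤ w s(1, 4) + w s(4, 5) + w s(2, 5) ∧ 3 ≤ w s(1, 4) + w s(4, 5) + w s(3, 5) := by
  constructor
  · rintro ⟨-, hw⟩
    have bound {p q : Fin 6} (γ : exampleTree.Walk p q)
        (hp : p ∈ exampleBoundary := by simp [exampleBoundary])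
        (hq : q ∈ exampleBoundary := by simp [exampleBoundary])
        (hγ : γ.support.Nodup := by decide) : exampleDist p q ≤ walkWeight w γ :=
      hw p hp q hq γ (.mk' hγ)
    refine ⟨?_, ?_, ?_, ?_, ?_, ?_⟩
    · simpa [exampleDist] using bound examplePathAB
    · simpa [exampleDist] using bound examplePathCD
    · simpa [exampleDist] using bound examplePathAC
    · simpa [exampleDist] using bound examplePathAD
    · simpa [exampleDist] using bound examplePathBC
    · simpa [exampleDist] using bound examplePathBD
  · rintro ⟨hab, hcd, hac, had, hbc, hbd⟩
    refine isGenFilling_of_isTree exampleTree_isTree (fun p _ q _ => exampleDist_comm p q)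
      (fun p _ => by simp [exampleDist]) ?_
    simp only [exampleBoundary, Set.mem_insert_iff, Set.mem_singleton_iff]
    rintro p (rfl | rfl | rfl | rfl) q (rfl | rfl | rfl | rfl) hpq <;>
      first
      | exact absurd hpq (by decide)
      | skip
    · exact ⟨examplePathAB, .mk' (by decide), by simpa [exampleDist] using hab⟩
    · exact ⟨examplePathAC, .mk' (by decide), by simpa [exampleDist] using hac⟩
    · exact ⟨examplePathAD, .mk' (by decide), by simpa [exampleDist] using had⟩
    · exact ⟨examplePathBC, .mk' (by decide), by simpa [exampleDist] using hbc⟩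
    · exact ⟨examplePathBD, .mk' (by decide), by simpa [exampleDist] using hbd⟩
    · exact ⟨examplePathCD, .mk' (by decide), by simpa [exampleDist] using hcd⟩
theorem seven_le_graphWeight_exampleTree {w : Sym2 (Fin 6) → ℝ}
    (hw : IsGenFilling exampleTree w exampleBoundary exampleDist) :
    7 ≤ graphWeight exampleTree w := by
  obtain ⟨hab, hcd, hac, -, -, hbd⟩ := (isGenFilling_exampleTree_iff w).mp hw
  rw [graphWeight_exampleTree]
  linarith

theorem eight_le_graphWeight_exampleTree {w : Sym2 (Fin 6) → ℝ}
    (hw : IsGenFilling exampleTree w exampleBoundary exampleDist) (huv : 0 ≤ w s(4, 5)) :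
    8 ≤ graphWeight exampleTree w := by
  obtain ⟨hab, hcd, -⟩ := (isGenFilling_exampleTree_iff w).mp hw
  rw [graphWeight_exampleTree]
  linarith

noncomputable def exampleWeight (x : ℝ) (e : Sym2 (Fin 6)) : ℝ :=
  if e = s(4, 5) then x else 2

theorem exampleWeight_nonneg {x : ℝ} (hx : 0 ≤ x) (e : Sym2 (Fin 6)) : 0 ≤ exampleWeight x e := by
  unfold exampleWeight
  split_ifs <;> linarith

theorem isGenFilling_exampleWeight {x : ℝ} (hx : -1 ≤ x) :
    IsGenFilling exampleTree (exampleWeight x) exampleBoundary exampleDist := by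
  rw [isGenFilling_exampleTree_iff]
  norm_num [exampleWeight, Sym2.eq_iff, Fin.ext_iff]
  linarith

theorem graphWeight_exampleWeight (x : ℝ) : graphWeight exampleTree (exampleWeight x) = 8 + x := by
  rw [graphWeight_exampleTree]
  norm_num [exampleWeight, Sym2.eq_iff, Fin.ext_iff]
  ring

/-- For the space and the tree of Example 2,
`mpf(M, G) = 8` while `mpf₋(M, G) = 7`; in particular the generalized
parametric minimal filling weight is strictly smaller than the parametric
minimal filling weight. -/
theorem example_mpf_gt_mpfNeg :
    sInf {r : ℝ | ∃ w : Sym2 (Fin 6) → ℝ,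
        IsGenFilling exampleTree w exampleBoundary exampleDist ∧
        (∀ f ∈ exampleTree.edgeSet, 0 ≤ w f) ∧ r = graphWeight exampleTree w} = 8 ∧
      sInf {r : ℝ | ∃ w : Sym2 (Fin 6) → ℝ,
        IsGenFilling exampleTree w exampleBoundary exampleDist ∧
        r = graphWeight exampleTree w} = 7 := by
  constructor
  · refine IsLeast.csInf_eq ⟨⟨exampleWeight 0, isGenFilling_exampleWeight (by norm_num),
      fun e _ => exampleWeight_nonneg le_rfl e, by rw [graphWeight_exampleWeight, add_zero]⟩, ?_⟩
    rintro _ ⟨w, hw, hnonneg, rfl⟩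
    exact eight_le_graphWeight_exampleTree hw (hnonneg _ exampleTree_adj_uv)
  · refine IsLeast.csInf_eq ⟨⟨exampleWeight (-1), isGenFilling_exampleWeight le_rfl,
      by rw [graphWeight_exampleWeight]; norm_num⟩, ?_⟩
    rintro _ ⟨w, hw, rfl⟩
    exact seven_le_graphWeight_exampleTree hw

end MinFill
end
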